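/- Let β ≥ 1 and let b : ℝ → ℝ satisfy b(t) ≥ β for all t. Define C(t) = B̄₁ ∩ S(t) where B̄₁ ⊆ ℝ² is the closed ball of radius 1 centered at (−1.5, 0) and S(t) = {x ∈ ℝ² : x₁² + x₂²/b(t)² ≥ 1}, and for each t let (p(t), q(t)) be the unique point with q(t) ≥ 0 lying on both the circle (p+1.5)² + q² = 1 and the ellipse p² + q²/b(t)² = 1. Then for all t, s ∈ ℝ, d_H(C(t), C(s)) ≤ ‖(p(t), q(t)) − (p(s), q(s))‖. -/

import Mathlib

/-!
For `b ≤ b'` the region `C(b')` lies inside `C(b)`, so only the points of `C(b) \ C(b')` need a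
partner in `C(b')`, and by the symmetry `y ↦ -y` it suffices to treat `y ≥ 0`. With `(p, q)` and
`(p', q')` the corners of `C(b)` and `C(b')`, such a point `(x, y)` is matched within `p - p'`
horizontally and `q' - q` vertically: by the corner `(p', q')` if `y > q`, and otherwise by the
point of the ellipse `x² + y²/b'² = 1` at height `y q' / q`. The horizontal estimates come from
the monotonicity of `√(1 - x) - √(1 - y)` and from the inequality `√(1 - q²/b'²) ≤ p - 2p'`.
-/

noncomputable section
open Metric Set

/-- The point of ℝ² with given coordinates. -/
def pt2 (a c : ℝ) : EuclideanSpace ℝ (Fin 2) := (WithLp.equiv 2 _).symm ![a, c]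

theorem EuclideanSpace.dist_le_dist_of_forall_dist_le {ι : Type*} [Fintype ι]
    {x y u v : EuclideanSpace ℝ ι} (h : ∀ i, dist (x i) (y i) ≤ dist (u i) (v i)) :
    dist x y ≤ dist u v := by
  rw [EuclideanSpace.dist_eq, EuclideanSpace.dist_eq]
  gcongr with i
  exact h i

theorem dist_pt2 (x : EuclideanSpace ℝ (Fin 2)) (a c : ℝ) :
    dist x (pt2 a c) = √((x 0 - a) ^ 2 + (x 1 - c) ^ 2) := by
  simp [EuclideanSpace.dist_eq, Fin.sum_univ_two, Real.dist_eq, sq_abs, pt2]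

-- Both sides are `(y - x) / (√(1 - x) + √(1 - y))`: the numerator grows, the denominator
-- shrinks.
theorem sqrt_one_sub_sub_sqrt_one_sub_le {x y x' y' : ℝ} (hxy : x ≤ y) (hxx' : x ≤ x')
    (hyy' : y ≤ y') (hy' : y' ≤ 1) (h : y - x ≤ y' - x') :
    √(1 - x) - √(1 - y) ≤ √(1 - x') - √(1 - y') := by
  have ha := Real.sq_sqrt (show 0 ≤ 1 - x by linarith)
  have hb := Real.sq_sqrt (show 0 ≤ 1 - y by linarith)
  have ha' := Real.sq_sqrt (show 0 ≤ 1 - x' by linarith)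
  have hb' := Real.sq_sqrt (show 0 ≤ 1 - y' by linarith)
  have hab : √(1 - y) ≤ √(1 - x) := Real.sqrt_le_sqrt (by linarith)
  have hab' : √(1 - y') ≤ √(1 - x') := Real.sqrt_le_sqrt (by linarith)
  have haa' : √(1 - x') ≤ √(1 - x) := Real.sqrt_le_sqrt (by linarith)
  have hbb' : √(1 - y') ≤ √(1 - y) := Real.sqrt_le_sqrt (by linarith)
  nlinarith [Real.sqrt_nonneg (1 - y')]

def ellipseHalfWidth (b y : ℝ) : ℝ := √(1 - y ^ 2 / b ^ 2)

theorem ellipseHalfWidth_sq {b y : ℝ} (h : y ^ 2 ≤ b ^ 2) :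
    ellipseHalfWidth b y ^ 2 = 1 - y ^ 2 / b ^ 2 :=
  Real.sq_sqrt (sub_nonneg.2 (div_le_one_of_le₀ h (sq_nonneg b)))

theorem ellipseHalfWidth_le_of_le {b y y' : ℝ} (hy : 0 ≤ y) (hyy' : y ≤ y') :
    ellipseHalfWidth b y' ≤ ellipseHalfWidth b y := by
  unfold ellipseHalfWidth
  gcongr

theorem ellipseHalfWidth_mul_sub_le_mul_sub {b b' c c' u : ℝ} (hu : u ^ 2 ≤ 1)
    (hcc' : c' ^ 2 / b' ^ 2 ≤ c ^ 2 / b ^ 2) (hc : c ^ 2 / b ^ 2 ≤ 1) :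
    ellipseHalfWidth b' (c' * u) - ellipseHalfWidth b' c' ≤
      ellipseHalfWidth b (c * u) - ellipseHalfWidth b c := by
  have hc' : 0 ≤ c' ^ 2 / b' ^ 2 := by positivity
  simp only [ellipseHalfWidth, mul_pow, mul_comm _ (u ^ 2), mul_div_assoc]
  exact sqrt_one_sub_sub_sqrt_one_sub_le (mul_le_of_le_one_left hc' hu) (by gcongr) hcc' hc
    (by nlinarith [mul_le_mul_of_nonneg_right hu (sub_nonneg.2 hcc')])

theorem ellipseHalfWidth_mul_sub_mul_le_sub {b c c' u : ℝ} (hu : u ^ 2 ≤ 1)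
    (hcc' : c ^ 2 ≤ c' ^ 2) (hc' : c' ^ 2 ≤ b ^ 2) :
    ellipseHalfWidth b (c * u) - ellipseHalfWidth b (c' * u) ≤
      ellipseHalfWidth b c - ellipseHalfWidth b c' := by
  have hk : c ^ 2 / b ^ 2 ≤ c' ^ 2 / b ^ 2 := by gcongr
  have hk' : c' ^ 2 / b ^ 2 ≤ 1 := div_le_one_of_le₀ hc' (sq_nonneg b)
  simp only [ellipseHalfWidth, mul_pow, mul_comm _ (u ^ 2), mul_div_assoc]
  exact sqrt_one_sub_sub_sqrt_one_sub_le (by gcongr) (mul_le_of_le_one_left (by positivity) hu)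
    (mul_le_of_le_one_left (by positivity) hu) hk'
    (by nlinarith [mul_le_mul_of_nonneg_right hu (sub_nonneg.2 hk)])

theorem le_neg_ellipseHalfWidth {b x y : ℝ} (hx : x ≤ 0) (h : 1 ≤ x ^ 2 + y ^ 2 / b ^ 2) :
    x ≤ -ellipseHalfWidth b y := by
  rw [le_neg, ellipseHalfWidth, Real.sqrt_le_left (neg_nonneg.2 hx)]
  linarith

theorem neg_ellipseHalfWidth_lt {b x y : ℝ} (h : x ^ 2 + y ^ 2 / b ^ 2 < 1) :
    -ellipseHalfWidth b y < x :=
  Real.neg_sqrt_lt_of_sq_lt (by linarith)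

structure IsUpperIntersection (b p q : ℝ) : Prop where
  q_nonneg : 0 ≤ q
  circle : (p + 1.5) ^ 2 + q ^ 2 = 1
  ellipse : p ^ 2 + q ^ 2 / b ^ 2 = 1

namespace IsUpperIntersection

variable {b p q b' p' q' x y z : ℝ}

theorem q_sq_eq (h : IsUpperIntersection b p q) (hb : b ≠ 0) : q ^ 2 = b ^ 2 * (1 - p ^ 2) := by
  have := h.ellipse
  field_simp at this
  linarith

theorem sq_sub_one_mul (h : IsUpperIntersection b p q) (hb : b ≠ 0) :
    (b ^ 2 - 1) * (1 - p ^ 2) = -3 * (p + 3 / 4) := by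
  linear_combination h.circle - h.q_sq_eq hb

theorem p_mem_Icc (h : IsUpperIntersection b p q) (hb : 1 ≤ b) : p ∈ Icc (-1) (-3 / 4) := by
  have hp : p ^ 2 ≤ 1 := by linarith [h.ellipse, div_nonneg (sq_nonneg q) (sq_nonneg b)]
  have hb2 : 0 ≤ b ^ 2 - 1 := by nlinarith
  constructor
  · nlinarith
  · nlinarith [h.sq_sub_one_mul (one_pos.trans_le hb).ne', mul_nonneg hb2 (sub_nonneg.2 hp)]

theorem q_pos (h : IsUpperIntersection b p q) (hb : 1 ≤ b) : 0 < q := by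
  obtain ⟨hp, hp'⟩ := h.p_mem_Icc hb
  by_contra! hq
  nlinarith [h.circle, h.q_nonneg]

theorem q_le_one (h : IsUpperIntersection b p q) : q ≤ 1 := by
  nlinarith [h.circle, sq_nonneg (p + 1.5), h.q_nonneg]

theorem ellipseHalfWidth_eq (h : IsUpperIntersection b p q) (hb : 1 ≤ b) :
    ellipseHalfWidth b q = -p := by
  rw [ellipseHalfWidth, show 1 - q ^ 2 / b ^ 2 = (-p) ^ 2 by linarith [h.ellipse],
    Real.sqrt_sq (by linarith [(h.p_mem_Icc hb).2])]

theorem add_le_neg_mul_sq (h : IsUpperIntersection b p q) (hb : 1 ≤ b) :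
    p + 9 / 4 ≤ -2 * p * b ^ 2 := by
  obtain ⟨hp, hp'⟩ := h.p_mem_Icc hb
  have e : (-2 * p * b ^ 2 - (p + 9 / 4)) * (1 - p ^ 2) = 3 * (p + 3 / 4) * ((p + 1) ^ 2 - 2) := by
    linear_combination (2 * p) * h.q_sq_eq (one_pos.trans_le hb).ne' - (2 * p) * h.circle
  have hprod : 0 ≤ 3 * (p + 3 / 4) * ((p + 1) ^ 2 - 2) :=
    mul_nonneg_of_nonpos_of_nonpos (by linarith) (by nlinarith)
  have h1p : 0 < 1 - p ^ 2 := by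
    linarith [h.ellipse, div_pos (pow_pos (h.q_pos hb) 2) (pow_pos (one_pos.trans_le hb) 2)]
  exact sub_nonneg.1 (nonneg_of_mul_nonneg_left (e ▸ hprod) h1p)

theorem p_le_of_le (h : IsUpperIntersection b p q) (h' : IsUpperIntersection b' p' q')
    (hb : 1 ≤ b) (hbb' : b ≤ b') : p' ≤ p := by
  obtain ⟨hp, hp'⟩ := h.p_mem_Icc hb
  obtain ⟨hq, hq'⟩ := h'.p_mem_Icc (hb.trans hbb')
  have e := h.sq_sub_one_mul (one_pos.trans_le hb).ne'
  have e' := h'.sq_sub_one_mul (one_pos.trans_le (hb.trans hbb')).ne'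
  by_contra! hlt
  have hb2 : b ^ 2 - 1 ≤ b' ^ 2 - 1 := by nlinarith [pow_le_pow_left₀ (by linarith) hbb' 2]
  have hp2 : 1 - p ^ 2 ≤ 1 - p' ^ 2 := by nlinarith
  nlinarith [mul_le_mul hb2 hp2 (by nlinarith) (by nlinarith)]

theorem q_le_of_le (h : IsUpperIntersection b p q) (h' : IsUpperIntersection b' p' q')
    (hb : 1 ≤ b) (hbb' : b ≤ b') : q ≤ q' := by
  have hpp' := h.p_le_of_le h' hb hbb'
  obtain ⟨hq, hq'⟩ := h'.p_mem_Icc (hb.trans hbb')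
  nlinarith [h.circle, h'.circle, h.q_nonneg, h'.q_nonneg]

theorem sq_div_sq_le_of_le (h : IsUpperIntersection b p q) (h' : IsUpperIntersection b' p' q')
    (hb : 1 ≤ b) (hbb' : b ≤ b') : q' ^ 2 / b' ^ 2 ≤ q ^ 2 / b ^ 2 := by
  have hpp' := h.p_le_of_le h' hb hbb'
  obtain ⟨hp, hp'⟩ := h.p_mem_Icc hb
  nlinarith [h.ellipse, h'.ellipse]

theorem ellipseHalfWidth_le_sub_two_mul (h : IsUpperIntersection b p q)
    (h' : IsUpperIntersection b' p' q') (hb : 1 ≤ b) (hbb' : b ≤ b') :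
    ellipseHalfWidth b' q ≤ p - 2 * p' := by
  have hb' := hb.trans hbb'
  have hpp' := h.p_le_of_le h' hb hbb'
  obtain ⟨hp, hp'⟩ := h.p_mem_Icc hb
  set F := ellipseHalfWidth b' q
  have hF : -p' ≤ F :=
    h'.ellipseHalfWidth_eq hb' ▸ ellipseHalfWidth_le_of_le h.q_nonneg (h.q_le_of_le h' hb hbb')
  have hF2 : b' ^ 2 * (F + p') * (F - p') = (p - p') * (p + p' + 3) := by
    have hqb' : q ^ 2 ≤ b' ^ 2 := by nlinarith [h.q_le_one, h.q_nonneg]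
    rw [show b' ^ 2 * (F + p') * (F - p') = b' ^ 2 * (F ^ 2 - p' ^ 2) by ring,
      ellipseHalfWidth_sq hqb']
    have := h'.q_sq_eq (one_pos.trans_le hb').ne'
    field_simp
    nlinarith [h.circle, h'.circle]
  have := h'.add_le_neg_mul_sq hb'
  have hpos : 0 < b' ^ 2 * (F - p') := by nlinarith
  have : b' ^ 2 * (F - p') * (F + p' - (p - p')) ≤ 0 := by
    nlinarith [mul_le_mul_of_nonneg_left (show -2 * p' ≤ F - p' by linarith) (sq_nonneg b')]
  nlinarith

theorem le_q_of_inside (h : IsUpperIntersection b p q) (hb : 1 ≤ b)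
    (hball : (x + 1.5) ^ 2 + y ^ 2 ≤ 1) (hin : x ^ 2 + y ^ 2 / b ^ 2 < 1) (hy : 0 ≤ y) :
    y ≤ q := by
  obtain ⟨hp, hp'⟩ := h.p_mem_Icc hb
  rw [← pow_le_pow_iff_left₀ hy h.q_nonneg two_ne_zero]
  rcases le_or_gt p x with hpx | hxp
  · nlinarith [h.circle]
  · have : y ^ 2 / b ^ 2 ≤ q ^ 2 / b ^ 2 := by nlinarith [h.ellipse]
    exact (div_le_div_iff_of_pos_right (by positivity)).1 this

theorem le_p_of_le_q (h : IsUpperIntersection b p q) (hb : 1 ≤ b)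
    (hball : (x + 1.5) ^ 2 + y ^ 2 ≤ 1) (hqy : q ≤ y) : x ≤ p := by
  obtain ⟨hp, hp'⟩ := h.p_mem_Icc hb
  nlinarith [h.circle, h.q_nonneg]

theorem neg_ellipseHalfWidth_mem_ball (h : IsUpperIntersection b p q) (hb : 1 ≤ b)
    (hz : 0 ≤ z) (hzq : z ≤ q) : (-ellipseHalfWidth b z + 1.5) ^ 2 + z ^ 2 ≤ 1 := by
  have hF : -p ≤ ellipseHalfWidth b z :=
    h.ellipseHalfWidth_eq hb ▸ ellipseHalfWidth_le_of_le hz hzq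
  have hF2 := ellipseHalfWidth_sq (show z ^ 2 ≤ b ^ 2 by nlinarith [h.q_le_one])
  have hb2 : 0 ≤ 1 - 1 / b ^ 2 := by
    rw [sub_nonneg, div_le_one (by positivity)]
    nlinarith
  have hzq2 : z ^ 2 * (1 - 1 / b ^ 2) ≤ q ^ 2 * (1 - 1 / b ^ 2) := by gcongr
  calc (-ellipseHalfWidth b z + 1.5) ^ 2 + z ^ 2
      = 3.25 - 3 * ellipseHalfWidth b z + z ^ 2 * (1 - 1 / b ^ 2) := by
        linear_combination hF2
    _ ≤ 3.25 + 3 * p + q ^ 2 * (1 - 1 / b ^ 2) := by linarith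
    _ = 1 := by linear_combination h.circle - h.ellipse

theorem exists_close_of_le_q (h : IsUpperIntersection b p q) (h' : IsUpperIntersection b' p' q')
    (hb : 1 ≤ b) (hbb' : b ≤ b') (hball : (x + 1.5) ^ 2 + y ^ 2 ≤ 1)
    (hout : 1 ≤ x ^ 2 + y ^ 2 / b ^ 2) (hin : x ^ 2 + y ^ 2 / b' ^ 2 < 1)
    (hy : 0 ≤ y) (hyq : y ≤ q) :
    ∃ w z, (w + 1.5) ^ 2 + z ^ 2 ≤ 1 ∧ 1 ≤ w ^ 2 + z ^ 2 / b' ^ 2 ∧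
      |x - w| ≤ p - p' ∧ |y - z| ≤ q' - q := by
  have hb' := hb.trans hbb'
  have hq := h.q_pos hb
  have hqq' := h.q_le_of_le h' hb hbb'
  have hq'1 := h'.q_le_one
  have hx : x ≤ 0 := by nlinarith
  obtain ⟨u, rfl⟩ : ∃ u, y = q * u := ⟨y / q, by field_simp⟩
  have hu : 0 ≤ u := nonneg_of_mul_nonneg_right hy hq
  have hu1 : u ≤ 1 := by nlinarith
  have hu2 : u ^ 2 ≤ 1 := by nlinarith
  have hz : q' * u ≤ q' := by nlinarith [h'.q_nonneg]
  have hk1 : q ^ 2 / b ^ 2 ≤ 1 := by linarith [h.ellipse, sq_nonneg p]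
  refine ⟨-ellipseHalfWidth b' (q' * u), q' * u,
    h'.neg_ellipseHalfWidth_mem_ball hb' (mul_nonneg h'.q_nonneg hu) hz, ?_,
    abs_sub_le_iff.2 ⟨?_, ?_⟩, ?_⟩
  · rw [neg_sq, ellipseHalfWidth_sq (by nlinarith [h'.q_nonneg, mul_nonneg h'.q_nonneg hu])]
    linarith
  · have := ellipseHalfWidth_mul_sub_le_mul_sub hu2 (h.sq_div_sq_le_of_le h' hb hbb') hk1
    linarith [le_neg_ellipseHalfWidth hx hout, h.ellipseHalfWidth_eq hb,
      h'.ellipseHalfWidth_eq hb']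
  · have := ellipseHalfWidth_mul_sub_mul_le_sub (b := b') hu2
      (pow_le_pow_left₀ h.q_nonneg hqq' 2) (by nlinarith [h'.q_nonneg])
    linarith [neg_ellipseHalfWidth_lt hin, h'.ellipseHalfWidth_eq hb',
      h.ellipseHalfWidth_le_sub_two_mul h' hb hbb']
  · rw [abs_sub_comm, abs_of_nonneg (by nlinarith)]
    nlinarith

theorem exists_close_of_q_lt (h : IsUpperIntersection b p q) (h' : IsUpperIntersection b' p' q')
    (hb : 1 ≤ b) (hbb' : b ≤ b') (hball : (x + 1.5) ^ 2 + y ^ 2 ≤ 1)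
    (hin : x ^ 2 + y ^ 2 / b' ^ 2 < 1) (hqy : q < y) :
    ∃ w z, (w + 1.5) ^ 2 + z ^ 2 ≤ 1 ∧ 1 ≤ w ^ 2 + z ^ 2 / b' ^ 2 ∧
      |x - w| ≤ p - p' ∧ |y - z| ≤ q' - q := by
  have hyq' := h'.le_q_of_inside (hb.trans hbb') hball hin (h.q_nonneg.trans hqy.le)
  have hF := (ellipseHalfWidth_le_of_le h.q_nonneg hqy.le (b := b')).trans
    (h.ellipseHalfWidth_le_sub_two_mul h' hb hbb')
  refine ⟨p', q', h'.circle.le, h'.ellipse.ge,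
    abs_sub_le_iff.2 ⟨?_, ?_⟩, abs_sub_le_iff.2 ⟨?_, ?_⟩⟩ <;>
  linarith [h.le_p_of_le_q hb hball hqy.le, neg_ellipseHalfWidth_lt hin]

theorem exists_close (h : IsUpperIntersection b p q) (h' : IsUpperIntersection b' p' q')
    (hb : 1 ≤ b) (hbb' : b ≤ b') (hball : (x + 1.5) ^ 2 + y ^ 2 ≤ 1)
    (hout : 1 ≤ x ^ 2 + y ^ 2 / b ^ 2) (hin : x ^ 2 + y ^ 2 / b' ^ 2 < 1) :
    ∃ w z, (w + 1.5) ^ 2 + z ^ 2 ≤ 1 ∧ 1 ≤ w ^ 2 + z ^ 2 / b' ^ 2 ∧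
      |x - w| ≤ p - p' ∧ |y - z| ≤ q' - q := by
  wlog hy : 0 ≤ y generalizing y
  · obtain ⟨w, z, hball', hout', hw, hz⟩ :=
      this (y := -y) (by rwa [neg_sq]) (by rwa [neg_sq]) (by rwa [neg_sq]) (by linarith)
    refine ⟨w, -z, by rwa [neg_sq], by rwa [neg_sq], hw, ?_⟩
    rwa [sub_neg_eq_add, ← abs_neg, neg_add']
  rcases le_or_gt y q with hyq | hqy
  · exact exists_close_of_le_q h h' hb hbb' hball hout hin hy hyq
  · exact exists_close_of_q_lt h h' hb hbb' hball hin hqy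

end IsUpperIntersection

def ballOutsideEllipse (b : ℝ) : Set (EuclideanSpace ℝ (Fin 2)) :=
  closedBall (pt2 (-1.5) 0) 1 ∩ {x | 1 ≤ x 0 ^ 2 + x 1 ^ 2 / b ^ 2}

theorem mem_ballOutsideEllipse {b : ℝ} {x : EuclideanSpace ℝ (Fin 2)} :
    x ∈ ballOutsideEllipse b ↔
      (x 0 + 1.5) ^ 2 + x 1 ^ 2 ≤ 1 ∧ 1 ≤ x 0 ^ 2 + x 1 ^ 2 / b ^ 2 := by
  rw [ballOutsideEllipse, mem_inter_iff, mem_closedBall, dist_pt2, Real.sqrt_le_one]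
  norm_num

theorem ballOutsideEllipse_subset {b b' : ℝ} (hb : 0 < b) (hbb' : b ≤ b') :
    ballOutsideEllipse b' ⊆ ballOutsideEllipse b := by
  intro x hx
  rw [mem_ballOutsideEllipse] at hx ⊢
  refine ⟨hx.1, hx.2.trans ?_⟩
  gcongr

theorem exists_mem_ballOutsideEllipse_dist_le {b b' p q p' q' : ℝ}
    (h : IsUpperIntersection b p q) (h' : IsUpperIntersection b' p' q') (hb : 1 ≤ b)
    (hbb' : b ≤ b') {x : EuclideanSpace ℝ (Fin 2)} (hx : x ∈ ballOutsideEllipse b) :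
    ∃ w ∈ ballOutsideEllipse b', dist x w ≤ dist (pt2 p q) (pt2 p' q') := by
  by_cases hx' : x ∈ ballOutsideEllipse b'
  · exact ⟨x, hx', by simp⟩
  rw [mem_ballOutsideEllipse, not_and, not_le] at hx'
  rw [mem_ballOutsideEllipse] at hx
  obtain ⟨w, z, hball, hout, hw, hz⟩ := h.exists_close h' hb hbb' hx.1 hx.2 (hx' hx.1)
  refine ⟨pt2 w z, mem_ballOutsideEllipse.2 ⟨hball, hout⟩,
    EuclideanSpace.dist_le_dist_of_forall_dist_le fun i => ?_⟩
  have hpp' := h.p_le_of_le h' hb hbb'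
  have hqq' := h.q_le_of_le h' hb hbb'
  fin_cases i
  · simpa [Real.dist_eq, pt2, abs_of_nonneg (sub_nonneg.2 hpp')] using hw
  · simpa [Real.dist_eq, pt2, abs_sub_comm q, abs_of_nonneg (sub_nonneg.2 hqq')] using hz

theorem hausdorffDist_ballOutsideEllipse_le {b b' p q p' q' : ℝ}
    (h : IsUpperIntersection b p q) (h' : IsUpperIntersection b' p' q') (hb : 1 ≤ b)
    (hbb' : b ≤ b') :
    hausdorffDist (ballOutsideEllipse b) (ballOutsideEllipse b') ≤
      dist (pt2 p q) (pt2 p' q') :=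
  hausdorffDist_le_of_mem_dist dist_nonneg
    (fun _ hx => exists_mem_ballOutsideEllipse_dist_le h h' hb hbb' hx)
    (fun x hx => ⟨x, ballOutsideEllipse_subset (by linarith) hbb' hx, by simp⟩)

/-- The Hausdorff distance between the sets C(t) and C(s) of the toy example is bounded by
the distance between the corresponding circle–ellipse intersection points. -/
theorem toy_example_hausdorffDist_le_intersection_dist
    (β : ℝ) (hβ : 1 ≤ β) (b : ℝ → ℝ) (hbβ : ∀ t, β ≤ b t)
    (C : ℝ → Set (EuclideanSpace ℝ (Fin 2)))
    (hC : ∀ t, C t = Metric.closedBall (pt2 (-1.5) 0) 1 ∩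
      {x : EuclideanSpace ℝ (Fin 2) | 1 ≤ (x 0) ^ 2 + (x 1) ^ 2 / (b t) ^ 2})
    (p q : ℝ → ℝ)
    (hpq : ∀ t, 0 ≤ q t ∧ (p t + 1.5) ^ 2 + (q t) ^ 2 = 1 ∧
      (p t) ^ 2 + (q t) ^ 2 / (b t) ^ 2 = 1) :
    ∀ t s, hausdorffDist (C t) (C s) ≤ ‖pt2 (p t) (q t) - pt2 (p s) (q s)‖ := by
  intro t s
  have hb : ∀ t, 1 ≤ b t := fun t => hβ.trans (hbβ t)
  have hP : ∀ t, IsUpperIntersection (b t) (p t) (q t) := fun t =>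
    ⟨(hpq t).1, (hpq t).2.1, (hpq t).2.2⟩
  rw [hC, hC, ← dist_eq_norm]
  rcases le_total (b t) (b s) with hts | hst
  · exact hausdorffDist_ballOutsideEllipse_le (hP t) (hP s) (hb t) hts
  · rw [hausdorffDist_comm, dist_comm]
    exact hausdorffDist_ballOutsideEllipse_le (hP s) (hP t) (hb s) hst
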